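/- Let P be an abstract polytope of rank d ≥ 2 in class 2_{{0, 1, …, d−2}} (combinatorially two-orbit and facet-intransitive). Fix a flag Φ, and suppose γ_0, …, γ_{d−2}, γ′ ∈ Γ(P) satisfy γ_i(Φ) = Φ^i for each i ∈ {0, …, d−2} and γ′(Φ) = ((Φ^{d−1})^{d−2})^{d−1}. Then Γ(P) is generated by {γ_0, …, γ_{d−2}, γ′}. -/

import Mathlib

/-! Generic definitions about flags, flag orbits, and abstract polytopes. -/

variable {α : Type*} [PartialOrder α]

/-- Two flags (maximal chains) are in the same orbit of the automorphism group
(the group of order automorphisms) if some order automorphism maps one onto the other. -/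
def SameFlagOrbit (Φ Ψ : Flag α) : Prop :=
  ∃ γ : α ≃o α, γ '' (Φ : Set α) = (Ψ : Set α)

/-- The automorphism group has exactly two orbits on the flags. -/
def TwoFlagOrbits (α : Type*) [PartialOrder α] : Prop :=
  ∃ Φ Ψ : Flag α, ¬ SameFlagOrbit Φ Ψ ∧
    ∀ Ω : Flag α, SameFlagOrbit Ω Φ ∨ SameFlagOrbit Ω Ψ

/-- `Ψ` is the flag `Φ^i`: it differs from `Φ` in exactly the rank-`i` element
(with respect to the rank function `rk`). -/
def IsIAdjacent (rk : α → ℤ) (i : ℤ) (Φ Ψ : Flag α) : Prop :=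
  Φ ≠ Ψ ∧ ∀ x : α, rk x ≠ i → (x ∈ Φ ↔ x ∈ Ψ)

/-- A two-orbit polytope (with rank function `rk`, adjacency indices `0, …, n-1`)
is in class `2_I` if, for every flag `Φ` and every `i < n`, the `i`-adjacent flag `Φ^i`
lies in the same orbit as `Φ` exactly when `i ∈ I`. -/
def InClass (rk : α → ℤ) (n : ℕ) (I : Set ℕ) : Prop :=
  TwoFlagOrbits α ∧
    ∀ (Φ Ψ : Flag α) (i : ℕ), i < n → IsIAdjacent rk i Φ Ψ →
      (SameFlagOrbit Φ Ψ ↔ i ∈ I)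

/-- An abstract polytope of rank `d`: a bounded poset, graded by a rank function `rk`
taking values `-1, 0, …, d`, in which every flag (maximal chain) has exactly one element
of each rank, satisfying the diamond condition and strong flag-connectivity. -/
structure IsAbstractPolytope (α : Type*) [PartialOrder α] [BoundedOrder α]
    (rk : α → ℤ) (d : ℕ) : Prop where
  rk_bot : rk ⊥ = -1
  rk_top : rk ⊤ = d
  rk_strictMono : StrictMono rk
  rk_cover : ∀ x y : α, x ⋖ y → rk y = rk x + 1
  flag_ranks : ∀ (Φ : Flag α) (i : ℤ), -1 ≤ i → i ≤ d → ∃! x, x ∈ Φ ∧ rk x = i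
  diamond : ∀ x y : α, x < y → rk y = rk x + 2 →
    ∃ a b : α, a ≠ b ∧ ∀ z : α, (x < z ∧ z < y) ↔ (z = a ∨ z = b)
  connected : ∀ Φ Ψ : Flag α, ∃ (n : ℕ) (c : Fin (n + 1) → Flag α),
    c 0 = Φ ∧ c (Fin.last n) = Ψ ∧
    (∀ k : Fin n, ∃ i : ℤ, IsIAdjacent rk i (c k.castSucc) (c k.succ)) ∧
    (∀ k, (Φ : Set α) ∩ (Ψ : Set α) ⊆ (c k : Set α))

/-! Let `H` be the subgroup generated by the `γᵢ` and `γ'`. Every flag is either `g Φ` or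
`(g Φ)^{d-1}` for some `g ∈ H`: this property propagates along adjacencies, because
`(g Φ)^i = g γᵢ Φ` for `i ≤ d - 2`, `((g Φ)^{d-1})^{d-2}` is `(d-1)`-adjacent to `g γ' Φ`, and
for `i < d - 2` the operations `^i` and `^{d-1}` commute. Facet-intransitivity rules out the
second case for the flags `δ Φ`, and since automorphisms act freely on flags, `δ Φ = g Φ` forces
`δ = g ∈ H`. -/

theorem Flag.mem_smul_iff {g : α ≃o α} {Φ : Flag α} {x : α} : x ∈ g • Φ ↔ g⁻¹ x ∈ Φ := by
  rw [← SetLike.mem_coe, Flag.coe_smul, Set.mem_smul_set_iff_inv_smul_mem]; rfl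

theorem Flag.smul_eq_iff {g : α ≃o α} {Φ Ψ : Flag α} : g • Φ = Ψ ↔ g '' Φ = Ψ := by
  rw [← SetLike.coe_set_eq]; rfl

theorem sameFlagOrbit_iff {Φ Ψ : Flag α} : SameFlagOrbit Φ Ψ ↔ ∃ g : α ≃o α, g • Φ = Ψ := by
  simp only [SameFlagOrbit, Flag.smul_eq_iff]

theorem IsIAdjacent.symm {rk : α → ℤ} {i : ℤ} {Φ Ψ : Flag α} (h : IsIAdjacent rk i Φ Ψ) :
    IsIAdjacent rk i Ψ Φ :=
  ⟨h.1.symm, fun x hx => (h.2 x hx).symm⟩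

def InOrbitOrFacetAdjacent (rk : α → ℤ) (d : ℕ) (H : Subgroup (α ≃o α)) (Φ Λ : Flag α) :
    Prop :=
  ∃ g ∈ H, g • Φ = Λ ∨ IsIAdjacent rk ((d : ℤ) - 1) Λ (g • Φ)

namespace IsAbstractPolytope

variable [BoundedOrder α] {rk : α → ℤ} {d : ℕ} (hP : IsAbstractPolytope α rk d)
include hP

theorem neg_one_le_rk (x : α) : -1 ≤ rk x := hP.rk_bot ▸ hP.rk_strictMono.monotone bot_le

theorem rk_le (x : α) : rk x ≤ d := hP.rk_top ▸ hP.rk_strictMono.monotone le_top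

theorem exists_mem_rk_eq (Φ : Flag α) (i : ℤ) (h₀ : -1 ≤ i) (h₁ : i ≤ d) :
    ∃ x ∈ Φ, rk x = i :=
  (hP.flag_ranks Φ i h₀ h₁).exists.imp fun _ hx => ⟨hx.1, hx.2⟩

theorem eq_of_mem_of_rk_eq {Φ : Flag α} {x y : α} (hx : x ∈ Φ) (hy : y ∈ Φ) (h : rk x = rk y) :
    x = y := by
  rcases Φ.le_or_le hx hy with hxy | hyx
  · exact eq_of_le_of_not_lt hxy fun hlt => (hP.rk_strictMono hlt).ne h
  · exact (eq_of_le_of_not_lt hyx fun hlt => (hP.rk_strictMono hlt).ne h.symm).symm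

theorem lt_of_mem_of_rk_lt {Φ : Flag α} {x y : α} (hx : x ∈ Φ) (hy : y ∈ Φ) (h : rk x < rk y) :
    x < y := by
  refine lt_of_le_of_ne ?_ fun hxy => h.ne (congrArg rk hxy)
  exact (Φ.le_or_le hx hy).resolve_right fun hyx => (hP.rk_strictMono.monotone hyx).not_gt h

theorem eq_bot_of_rk_eq {x : α} (h : rk x = -1) : x = ⊥ :=
  (eq_of_le_of_not_lt bot_le fun hlt => (hP.rk_strictMono hlt).ne (hP.rk_bot.trans h.symm)).symm

theorem eq_top_of_rk_eq {x : α} (h : rk x = d) : x = ⊤ :=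
  eq_of_le_of_not_lt le_top fun hlt => (hP.rk_strictMono hlt).ne (h.trans hP.rk_top.symm)

theorem covBy_of_rk_eq_add_one {x y : α} (hxy : x < y) (h : rk y = rk x + 1) : x ⋖ y :=
  ⟨hxy, fun z hxz hzy => by linarith [hP.rk_strictMono hxz, hP.rk_strictMono hzy]⟩

theorem rk_apply (g : α ≃o α) (x : α) : rk (g x) = rk x := by
  obtain ⟨n, hn⟩ : ∃ n : ℕ, rk x = n - 1 :=
    ⟨(rk x + 1).toNat, by have := hP.neg_one_le_rk x; omega⟩
  induction n generalizing x with
  | zero => rw [hP.eq_bot_of_rk_eq (x := x) (by simpa using hn), map_bot]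
  | succ n ih =>
    obtain ⟨Φ, hxΦ⟩ := Flag.exists_mem x
    obtain ⟨y, hyΦ, hy⟩ := hP.exists_mem_rk_eq Φ (rk x - 1) (by omega) (by linarith [hP.rk_le x])
    have hyx : y ⋖ x :=
      hP.covBy_of_rk_eq_add_one (hP.lt_of_mem_of_rk_lt hyΦ hxΦ (by omega)) (by omega)
    have hgyx : g y ⋖ g x := (apply_covBy_apply_iff g).2 hyx
    linarith [hP.rk_cover _ _ hgyx, ih y (by push_cast at hn ⊢; omega)]

theorem isIAdjacent_bounds {i : ℤ} {Φ Ψ : Flag α} (h : IsIAdjacent rk i Φ Ψ) :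
    0 ≤ i ∧ i ≤ d - 1 := by
  by_contra hi
  refine h.1 (SetLike.ext fun x => ?_)
  by_cases hx : rk x = i
  · have : rk x = -1 ∨ rk x = d := by have := hP.neg_one_le_rk x; have := hP.rk_le x; omega
    rcases this with hbot | htop
    · simp only [hP.eq_bot_of_rk_eq hbot, Φ.bot_mem, Ψ.bot_mem]
    · simp only [hP.eq_top_of_rk_eq htop, Φ.top_mem, Ψ.top_mem]
  · exact h.2 x hx

theorem flag_eq_of_mem_iff_of_mem {i : ℤ} {Φ Ψ : Flag α}
    (h : ∀ x, rk x ≠ i → (x ∈ Φ ↔ x ∈ Ψ)) {y : α} (hyΦ : y ∈ Φ) (hyΨ : y ∈ Ψ) (hy : rk y = i) :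
    Φ = Ψ := by
  refine SetLike.ext fun x => if hx : rk x = i then ⟨fun hxΦ => ?_, fun hxΨ => ?_⟩ else h x hx
  · rwa [hP.eq_of_mem_of_rk_eq hxΦ hyΦ (hx.trans hy.symm)]
  · rwa [hP.eq_of_mem_of_rk_eq hxΨ hyΨ (hx.trans hy.symm)]

theorem ne_of_isIAdjacent {i : ℤ} {Φ Ψ : Flag α} (h : IsIAdjacent rk i Φ Ψ) {x y : α}
    (hx : x ∈ Φ) (hy : y ∈ Ψ) (hrx : rk x = i) : x ≠ y := by
  rintro rfl
  exact h.1 (hP.flag_eq_of_mem_iff_of_mem h.2 hx hy hrx)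

theorem eq_of_ne_of_ne_of_mem_Ioo {a c x y z : α} (hac : rk c = rk a + 2)
    (hx : x ∈ Set.Ioo a c) (hy : y ∈ Set.Ioo a c) (hz : z ∈ Set.Ioo a c)
    (hxy : x ≠ y) (hxz : x ≠ z) : y = z := by
  obtain ⟨p, q, -, hpq⟩ := hP.diamond a c (hx.1.trans hx.2) hac
  rcases (hpq x).1 hx with rfl | rfl <;> rcases (hpq y).1 hy with rfl | rfl <;>
    rcases (hpq z).1 hz with rfl | rfl <;> tauto

/-- The diamond condition: `Λ₁` and `Λ₂` must both take the rank-`i` element that differs from the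
common one of `Λ` and `Λ'`. -/
theorem mem_of_isIAdjacent_of_isIAdjacent {i : ℤ} {Λ Λ' Λ₁ Λ₂ : Flag α}
    (hΛ : ∀ x, rk x ∈ Set.Icc (i - 1) (i + 1) → (x ∈ Λ ↔ x ∈ Λ'))
    (h₁ : IsIAdjacent rk i Λ Λ₁) (h₂ : IsIAdjacent rk i Λ' Λ₂) {z : α} (hz : z ∈ Λ₁)
    (hrz : rk z = i) : z ∈ Λ₂ := by
  obtain ⟨hi₀, hi₁⟩ := hP.isIAdjacent_bounds h₁
  obtain ⟨a, haΛ, hra⟩ := hP.exists_mem_rk_eq Λ (i - 1) (by omega) (by omega)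
  obtain ⟨c, hcΛ, hrc⟩ := hP.exists_mem_rk_eq Λ (i + 1) (by omega) (by omega)
  obtain ⟨x, hxΛ, hrx⟩ := hP.exists_mem_rk_eq Λ i (by omega) (by omega)
  obtain ⟨t, htΛ₂, hrt⟩ := hP.exists_mem_rk_eq Λ₂ i (by omega) (by omega)
  have haΛ' := (hΛ a (by rw [hra]; constructor <;> omega)).1 haΛ
  have hcΛ' := (hΛ c (by rw [hrc]; constructor <;> omega)).1 hcΛ
  have hxΛ' := (hΛ x (by rw [hrx]; constructor <;> omega)).1 hxΛ
  have haΛ₁ := (h₁.2 a (by omega)).1 haΛ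
  have hcΛ₁ := (h₁.2 c (by omega)).1 hcΛ
  have haΛ₂ := (h₂.2 a (by omega)).1 haΛ'
  have hcΛ₂ := (h₂.2 c (by omega)).1 hcΛ'
  have hzt : z = t := hP.eq_of_ne_of_ne_of_mem_Ioo (a := a) (c := c) (x := x) (by omega)
    ⟨hP.lt_of_mem_of_rk_lt haΛ hxΛ (by omega), hP.lt_of_mem_of_rk_lt hxΛ hcΛ (by omega)⟩
    ⟨hP.lt_of_mem_of_rk_lt haΛ₁ hz (by omega), hP.lt_of_mem_of_rk_lt hz hcΛ₁ (by omega)⟩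
    ⟨hP.lt_of_mem_of_rk_lt haΛ₂ htΛ₂ (by omega), hP.lt_of_mem_of_rk_lt htΛ₂ hcΛ₂ (by omega)⟩
    (hP.ne_of_isIAdjacent h₁ hxΛ hz hrx) (hP.ne_of_isIAdjacent h₂ hxΛ' htΛ₂ hrx)
  exact hzt ▸ htΛ₂

theorem isIAdjacent_unique {i : ℤ} {Φ Ψ₁ Ψ₂ : Flag α} (h₁ : IsIAdjacent rk i Φ Ψ₁)
    (h₂ : IsIAdjacent rk i Φ Ψ₂) : Ψ₁ = Ψ₂ := by
  obtain ⟨hi₀, hi₁⟩ := hP.isIAdjacent_bounds h₁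
  obtain ⟨z, hz, hrz⟩ := hP.exists_mem_rk_eq Ψ₁ i (by omega) (by omega)
  exact hP.flag_eq_of_mem_iff_of_mem (fun x hx => (h₁.2 x hx).symm.trans (h₂.2 x hx)) hz
    (hP.mem_of_isIAdjacent_of_isIAdjacent (fun _ _ => Iff.rfl) h₁ h₂ hz hrz) hrz

theorem isIAdjacent_comm_of_one_lt_abs_sub {i j : ℤ} (hij : 1 < |i - j|)
    {Λ Λ' Ψ Ψ' : Flag α} (hΛ : IsIAdjacent rk j Λ Ψ) (h₁ : IsIAdjacent rk i Λ Λ')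
    (h₂ : IsIAdjacent rk i Ψ Ψ') : IsIAdjacent rk j Λ' Ψ' := by
  rw [lt_abs] at hij
  have hnear : ∀ x, rk x ∈ Set.Icc (i - 1) (i + 1) → (x ∈ Λ ↔ x ∈ Ψ) :=
    fun x hx => hΛ.2 x (by obtain ⟨_, _⟩ := hx; omega)
  obtain ⟨hj₀, hj₁⟩ := hP.isIAdjacent_bounds hΛ
  obtain ⟨v, hvΛ, hrv⟩ := hP.exists_mem_rk_eq Λ j (by omega) (by omega)
  refine ⟨fun hΛ'Ψ' => ?_, fun x hx => ?_⟩
  · have hvΨ : v ∈ Ψ := (h₂.2 v (by omega)).2 (hΛ'Ψ' ▸ (h₁.2 v (by omega)).1 hvΛ)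
    exact hP.ne_of_isIAdjacent hΛ hvΛ hvΨ hrv rfl
  · by_cases hxi : rk x = i
    · exact ⟨fun h => hP.mem_of_isIAdjacent_of_isIAdjacent hnear h₁ h₂ h hxi,
        fun h => hP.mem_of_isIAdjacent_of_isIAdjacent (fun y hy => (hnear y hy).symm) h₂ h₁ h hxi⟩
    · exact (h₁.2 x hxi).symm.trans ((hΛ.2 x hx).trans (h₂.2 x hxi))

theorem isIAdjacent_smul (g : α ≃o α) {i : ℤ} {Φ Ψ : Flag α} (h : IsIAdjacent rk i Φ Ψ) :
    IsIAdjacent rk i (g • Φ) (g • Ψ) := by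
  refine ⟨(smul_left_cancel_iff g).not.2 h.1, fun x hx => ?_⟩
  simp only [Flag.mem_smul_iff]
  exact h.2 _ (by rwa [hP.rk_apply])

theorem flag_induction {p : Flag α → Prop} {Φ : Flag α} (hΦ : p Φ)
    (step : ∀ (i : ℤ) (Λ Λ' : Flag α), IsIAdjacent rk i Λ Λ' → p Λ → p Λ') (Ψ : Flag α) :
    p Ψ := by
  obtain ⟨n, c, hc₀, hcn, hadj, -⟩ := hP.connected Φ Ψ
  suffices ∀ k, p (c k) from hcn ▸ this (Fin.last n)
  intro k
  induction k using Fin.induction with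
  | zero => exact hc₀ ▸ hΦ
  | succ k ih => exact (hadj k).elim fun i hi => step i _ _ hi ih

theorem eq_one_of_smul_eq {g : α ≃o α} {Φ : Flag α} (h : g • Φ = Φ) : g = 1 := by
  have hfix : ∀ Ψ : Flag α, g • Ψ = Ψ :=
    hP.flag_induction (p := fun Ψ => g • Ψ = Ψ) h fun i Λ Λ' hΛΛ' hΛ =>
      hP.isIAdjacent_unique (hΛ ▸ hP.isIAdjacent_smul g hΛΛ') hΛΛ'
  ext x
  obtain ⟨Ψ, hxΨ⟩ := Flag.exists_mem x
  have hgx : g x ∈ Ψ := by rwa [← hfix Ψ, Flag.mem_smul_iff, RelIso.inv_apply_self]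
  exact hP.eq_of_mem_of_rk_eq hgx hxΨ (hP.rk_apply g x)

section Generation

variable {H : Subgroup (α ≃o α)} {Φ : Flag α}
  (hlow : ∀ i : ℕ, (i : ℤ) ≤ d - 2 → ∃ g ∈ H, IsIAdjacent rk i Φ (g • Φ))
  (htwist : ∃ Ψ Ω : Flag α, ∃ g ∈ H, IsIAdjacent rk ((d : ℤ) - 1) Φ Ψ ∧
    IsIAdjacent rk ((d : ℤ) - 2) Ψ Ω ∧ IsIAdjacent rk ((d : ℤ) - 1) Ω (g • Φ))
include hP hlow htwist

theorem inOrbitOrFacetAdjacent_of_isIAdjacent {i : ℤ} {Λ Λ' : Flag α}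
    (hΛΛ' : IsIAdjacent rk i Λ Λ') (hΛ : InOrbitOrFacetAdjacent rk d H Φ Λ) :
    InOrbitOrFacetAdjacent rk d H Φ Λ' := by
  obtain ⟨hi₀, hi₁⟩ := hP.isIAdjacent_bounds hΛΛ'
  lift i to ℕ using hi₀
  obtain ⟨g, hg, rfl | hΛg⟩ := hΛ
  · by_cases hi : (i : ℤ) ≤ d - 2
    · obtain ⟨h, hh, hΦh⟩ := hlow i hi
      refine ⟨g * h, mul_mem hg hh, Or.inl ?_⟩
      rw [mul_smul]
      exact hP.isIAdjacent_unique (hP.isIAdjacent_smul g hΦh) hΛΛ'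
    · exact ⟨g, hg, Or.inr ((show (i : ℤ) = d - 1 by omega) ▸ hΛΛ'.symm)⟩
  · rcases (by omega : (i : ℤ) = d - 1 ∨ (i : ℤ) = d - 2 ∨ (i : ℤ) + 1 < d - 1) with hi | hi | hi
    · exact ⟨g, hg, Or.inl (hP.isIAdjacent_unique hΛg (hi ▸ hΛΛ'))⟩
    · obtain ⟨Ψ, Ω, h, hh, hΦΨ, hΨΩ, hΩh⟩ := htwist
      have hΛ : Λ = g • Ψ := hP.isIAdjacent_unique hΛg.symm (hP.isIAdjacent_smul g hΦΨ)
      have hΛ' : Λ' = g • Ω :=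
        hP.isIAdjacent_unique (hi ▸ hΛΛ') (hΛ ▸ hP.isIAdjacent_smul g hΨΩ)
      refine ⟨g * h, mul_mem hg hh, Or.inr ?_⟩
      rw [hΛ', mul_smul]
      exact hP.isIAdjacent_smul g hΩh
    · obtain ⟨h, hh, hΦh⟩ := hlow i (by omega)
      refine ⟨g * h, mul_mem hg hh, Or.inr ?_⟩
      rw [mul_smul]
      exact hP.isIAdjacent_comm_of_one_lt_abs_sub (by rw [lt_abs]; omega) hΛg hΛΛ'
        (hP.isIAdjacent_smul g hΦh)

theorem inOrbitOrFacetAdjacent (Λ : Flag α) : InOrbitOrFacetAdjacent rk d H Φ Λ :=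
  hP.flag_induction ⟨1, one_mem H, Or.inl (one_smul _ Φ)⟩
    (fun _ _ _ h => hP.inOrbitOrFacetAdjacent_of_isIAdjacent hlow htwist h) Λ

theorem subgroup_eq_top_of_facetIntransitive
    (hfacet : ∀ Λ Λ', IsIAdjacent rk ((d : ℤ) - 1) Λ Λ' → ¬ SameFlagOrbit Λ Λ') : H = ⊤ := by
  refine eq_top_iff.2 fun δ _ => ?_
  obtain ⟨g, hg, hgδ | hadj⟩ := hP.inOrbitOrFacetAdjacent hlow htwist (δ • Φ)
  · have : g⁻¹ * δ = 1 := hP.eq_one_of_smul_eq (by rw [mul_smul, ← hgδ, inv_smul_smul])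
    exact inv_mul_eq_one.1 this ▸ hg
  · exact (hfacet _ _ hadj (sameFlagOrbit_iff.2 ⟨g * δ⁻¹, by rw [mul_smul, inv_smul_smul]⟩)).elim

end Generation

end IsAbstractPolytope

/-- Let `P` be an abstract polytope of rank `d ≥ 2` in class
`2_{{0,…,d-2}}` (combinatorially two-orbit and facet-intransitive). Fix a flag `Φ`, and
suppose `γ₀, …, γ_{d-2}, γ'` are automorphisms with `γᵢ(Φ) = Φ^i` for `i ≤ d - 2` and
`γ'(Φ) = ((Φ^{d-1})^{d-2})^{d-1}`. Then they generate the whole automorphism group. -/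
theorem generators_generate {α : Type*} [PartialOrder α] [BoundedOrder α]
    (rk : α → ℤ) (d : ℕ) (hd : 2 ≤ d)
    (hP : IsAbstractPolytope α rk d)
    (h2 : InClass rk d (Set.Iio (d - 1)))
    (Φ : Flag α) (Ψ : ℕ → Flag α)
    (hΨ : ∀ i : ℕ, i < d → IsIAdjacent rk i Φ (Ψ i))
    (Ω₁ Ω₂ : Flag α)
    (hΩ₁ : IsIAdjacent rk ((d : ℤ) - 2) (Ψ (d - 1)) Ω₁)
    (hΩ₂ : IsIAdjacent rk ((d : ℤ) - 1) Ω₁ Ω₂)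
    (γ : ℕ → α ≃o α)
    (hγ : ∀ i : ℕ, i ≤ d - 2 → γ i '' (Φ : Set α) = (Ψ i : Set α))
    (γ' : α ≃o α) (hγ' : γ' '' (Φ : Set α) = (Ω₂ : Set α)) :
    Subgroup.closure (γ '' Set.Iio (d - 1) ∪ {γ'}) = ⊤ := by
  have hγH : ∀ i, i < d - 1 → γ i ∈ Subgroup.closure (γ '' Set.Iio (d - 1) ∪ {γ'}) :=
    fun i hi => Subgroup.subset_closure (Or.inl ⟨i, hi, rfl⟩)
  have hcast : ((d - 1 : ℕ) : ℤ) = d - 1 := by omega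
  refine hP.subgroup_eq_top_of_facetIntransitive (Φ := Φ) (fun i hi => ?_) ?_ fun Λ Λ' h hsame => ?_
  · exact ⟨γ i, hγH i (by omega), Flag.smul_eq_iff.2 (hγ i (by omega)) ▸ hΨ i (by omega)⟩
  · exact ⟨Ψ (d - 1), Ω₁, γ', Subgroup.subset_closure (Or.inr rfl),
      hcast ▸ hΨ (d - 1) (by omega), hΩ₁, Flag.smul_eq_iff.2 hγ' ▸ hΩ₂⟩
  · simpa using (h2.2 Λ Λ' (d - 1) (by omega) (hcast ▸ h)).1 hsame
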